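/- For a morphism α : F → G in Sp (left-exact functors from C_Λ to Set), the following are equivalent: α is smooth; the induced morphism between the associated objects of cSp (given by A ↦ F(A_0)) is quasi-smooth; the induced morphism in cSp is smooth. -/

import Mathlib

open CategoryTheory Opposite

/-! ## The category `C_Λ` of local Artinian `Λ`-algebras with residue field `k`,
and the category `sC_Λ` of Artinian simplicial local `Λ`-algebras. -/

variable (Λ : Type) [CommRing Λ] [IsLocalRing Λ] [IsNoetherianRing Λ]
  [IsAdicComplete (IsLocalRing.maximalIdeal Λ) Λ]

/-- The residue field `k` of `Λ`. -/
abbrev resK := IsLocalRing.ResidueField Λ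

/-- An object of `C_Λ`: a local Artinian `Λ`-algebra whose residue field is
(canonically isomorphic to) `k`. -/
structure ArtAlg where
  carrier : Type
  [commRing : CommRing carrier]
  [algebra : Algebra Λ carrier]
  [artinian : IsArtinianRing carrier]
  [isLocal : IsLocalRing carrier]
  [localHom : IsLocalHom (algebraMap Λ carrier)]
  residue_bij : Function.Bijective
    (IsLocalRing.ResidueField.map (algebraMap Λ carrier))

attribute [instance] ArtAlg.commRing ArtAlg.algebra ArtAlg.artinian
  ArtAlg.isLocal ArtAlg.localHom

instance : Category (ArtAlg Λ) where
  Hom A B := A.carrier →ₐ[Λ] B.carrier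
  id A := AlgHom.id Λ A.carrier
  comp f g := g.comp f

/-- Interpret a morphism of `C_Λ` as an algebra homomorphism. -/
def ArtAlg.toAlg {Λ : Type} [CommRing Λ] [IsLocalRing Λ] [IsNoetherianRing Λ]
    [IsAdicComplete (IsLocalRing.maximalIdeal Λ) Λ] {A B : ArtAlg Λ}
    (f : A ⟶ B) : A.carrier →ₐ[Λ] B.carrier := f

/-- A morphism in `C_Λ` is surjective if its underlying map is. -/
def ArtAlg.Surjective {Λ : Type} [CommRing Λ] [IsLocalRing Λ] [IsNoetherianRing Λ]
    [IsAdicComplete (IsLocalRing.maximalIdeal Λ) Λ] {A B : ArtAlg Λ}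
    (f : A ⟶ B) : Prop := Function.Surjective (ArtAlg.toAlg f)

/-- The ideal `m(A)² + μ·m(A)` of `A`, by which one quotients the maximal ideal
to obtain the cotangent space `cot A = m(A)/(m(A)² + μ·m(A))`. -/
def cotDenom (R : ArtAlg Λ) : Ideal R.carrier :=
  (IsLocalRing.maximalIdeal R.carrier) ^ 2 ⊔
    ((IsLocalRing.maximalIdeal Λ).map (algebraMap Λ R.carrier) *
      IsLocalRing.maximalIdeal R.carrier)

/-- Vanishing, in degree `n`, of the normalisation `N(cot A)` of the cotangent
space of a simplicial object `X` of `C_Λ`: the normalisation in degree `n` is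
`⋂_{i>0} ker(∂ᵢ : (cot A)_n → (cot A)_{n-1})`. -/
def NormCotVanish (X : SimplicialObject (ArtAlg Λ)) : ℕ → Prop
  | 0 => ∀ x ∈ IsLocalRing.maximalIdeal (X.obj (op (SimplexCategory.mk (0)))).carrier,
      x ∈ cotDenom Λ (X.obj (op (SimplexCategory.mk (0))))
  | (n + 1) => ∀ x ∈ IsLocalRing.maximalIdeal (X.obj (op (SimplexCategory.mk (n + 1)))).carrier,
      (∀ i : Fin (n + 1), ArtAlg.toAlg (X.δ i.succ) x ∈ cotDenom Λ (X.obj (op (SimplexCategory.mk (n))))) →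
        x ∈ cotDenom Λ (X.obj (op (SimplexCategory.mk (n + 1))))

/-- An object of `sC_Λ`: an Artinian simplicial local `Λ`-algebra with residue
field `k`, i.e. a simplicial object of `C_Λ` whose normalised cotangent space
is concentrated in finitely many degrees and whose maximal ideal is (uniformly)
nilpotent (cf. Lemma 1.3 of the paper). -/
structure SArtAlg where
  X : SimplicialObject (ArtAlg Λ)
  nilpotent : ∃ n > 0, ∀ m : SimplexCategoryᵒᵖ,
    (IsLocalRing.maximalIdeal (X.obj m).carrier) ^ n = ⊥
  cotFinite : ∃ N : ℕ, ∀ n ≥ N, NormCotVanish Λ X n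

instance : Category (SArtAlg Λ) where
  Hom A B := A.X ⟶ B.X
  id A := 𝟙 A.X
  comp f g := f ≫ g

variable {Λ}

/-- The algebra homomorphism underlying a morphism of `sC_Λ` in simplicial degree `m`. -/
def SArtAlg.app {A B : SArtAlg Λ} (f : A ⟶ B) (m : SimplexCategoryᵒᵖ) :
    (A.X.obj m).carrier →ₐ[Λ] (B.X.obj m).carrier :=
  ArtAlg.toAlg (NatTrans.app f m)

/-- A morphism of `sC_Λ` is surjective if it is levelwise surjective. -/
def SArtAlg.Surj {A B : SArtAlg Λ} (f : A ⟶ B) : Prop :=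
  ∀ m, Function.Surjective (SArtAlg.app f m)

/-- Cycles for the Moore complex of a simplicial algebra:
`Z_i = {x ∈ A_i | ∂_j x = 0 for all j}` (in degrees `i > 0`), `Z_0 = A_0`. -/
def SArtAlg.isCycle (A : SArtAlg Λ) : ∀ i : ℕ, (A.X.obj (op (SimplexCategory.mk (i)))).carrier → Prop
  | 0, _ => True
  | (i + 1), x => ∀ j : Fin (i + 2), ArtAlg.toAlg (A.X.δ j) x = 0

/-- The boundary relation for the Moore complex: `x ~ y` iff `x - y = ∂₀ h` for
some `h` killed by all the other face maps. -/
def SArtAlg.mooreRel (A : SArtAlg Λ) (i : ℕ)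
    (x y : {z : (A.X.obj (op (SimplexCategory.mk (i)))).carrier // A.isCycle i z}) : Prop :=
  ∃ h : (A.X.obj (op (SimplexCategory.mk (i + 1)))).carrier,
    (∀ j : Fin (i + 1), ArtAlg.toAlg (A.X.δ j.succ) h = 0) ∧
      ArtAlg.toAlg (A.X.δ (0 : Fin (i + 2))) h = x.1 - y.1

/-- The homotopy group `π_i(A)` of a simplicial algebra, computed via the Moore complex. -/
def SArtAlg.pi (A : SArtAlg Λ) (i : ℕ) : Type := Quot (A.mooreRel i)

lemma SArtAlg.app_naturality {A B : SArtAlg Λ} (f : A ⟶ B) {m m' : SimplexCategoryᵒᵖ}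
    (g : m ⟶ m') (x : (A.X.obj m).carrier) :
    SArtAlg.app f m' (ArtAlg.toAlg (A.X.map g) x) =
      ArtAlg.toAlg (B.X.map g) (SArtAlg.app f m x) := by
  have h := NatTrans.naturality (self := f) g
  show ArtAlg.toAlg (A.X.map g ≫ NatTrans.app f m') x =
    ArtAlg.toAlg (NatTrans.app f m ≫ B.X.map g) x
  rw [h]

/-- The map induced by a morphism of `sC_Λ` on homotopy groups. -/
def SArtAlg.piMap {A B : SArtAlg Λ} (f : A ⟶ B) (i : ℕ) :
    A.pi i → B.pi i := by
  refine Quot.map (fun x => ⟨SArtAlg.app f (op (SimplexCategory.mk (i))) x.1, ?_⟩) ?_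
  · cases i with
    | zero => trivial
    | succ i =>
      intro j
      have h1 := SArtAlg.app_naturality f (g := (SimplexCategory.δ j).op) x.1
      have h2 : ArtAlg.toAlg (A.X.map (SimplexCategory.δ j).op) x.1 = 0 := x.2 j
      show ArtAlg.toAlg (B.X.map (SimplexCategory.δ j).op)
        (SArtAlg.app f (op (SimplexCategory.mk (i + 1))) x.1) = 0
      rw [← h1, h2, map_zero]
  · rintro x y ⟨h, hker, h0⟩
    refine ⟨SArtAlg.app f (op (SimplexCategory.mk (i + 1))) h, fun j => ?_, ?_⟩
    · have h1 := SArtAlg.app_naturality f (g := (SimplexCategory.δ j.succ).op) h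
      have h2 : ArtAlg.toAlg (A.X.map (SimplexCategory.δ j.succ).op) h = 0 := hker j
      show ArtAlg.toAlg (B.X.map (SimplexCategory.δ j.succ).op)
        (SArtAlg.app f (op (SimplexCategory.mk (i + 1))) h) = 0
      rw [← h1, h2, map_zero]
    · have h1 := SArtAlg.app_naturality f
        (g := (SimplexCategory.δ (0 : Fin (i + 2))).op) h
      have h2 : ArtAlg.toAlg (A.X.map (SimplexCategory.δ (0 : Fin (i + 2))).op) h
        = x.1 - y.1 := h0
      show ArtAlg.toAlg (B.X.map (SimplexCategory.δ (0 : Fin (i + 2))).op)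
        (SArtAlg.app f (op (SimplexCategory.mk (i + 1))) h) = _
      rw [← h1, h2, map_sub]

/-- A morphism of `sC_Λ` is acyclic if it induces isomorphisms on all homotopy groups. -/
def SArtAlg.Acyclic {A B : SArtAlg Λ} (f : A ⟶ B) : Prop :=
  ∀ i, Function.Bijective (SArtAlg.piMap f i)

/-- A small extension in `sC_Λ`: a surjection whose kernel `I` satisfies `m(A)·I = 0`. -/
def SArtAlg.SmallExt {A B : SArtAlg Λ} (f : A ⟶ B) : Prop :=
  SArtAlg.Surj f ∧ ∀ m, (IsLocalRing.maximalIdeal (A.X.obj m).carrier) *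
    RingHom.ker (SArtAlg.app f m).toRingHom = ⊥

/-- An acyclic small extension. -/
def SArtAlg.AcySmallExt {A B : SArtAlg Λ} (f : A ⟶ B) : Prop :=
  SArtAlg.SmallExt f ∧ SArtAlg.Acyclic f

/-! ## Set-valued deformation functors and smoothness -/

section SetFunctors

variable {𝒞 : Type*} [Category 𝒞]

/-- The fibre product `F(B) ×_{G(B)} G(A)` together with the assertion that the
canonical map from `F(A)` to it is surjective: every pair
`(b, a) ∈ F(B) × G(A)` with `α_B(b) = G(f)(a)` lifts to some element of `F(A)`. -/
def RelSurj {F G : 𝒞 ⥤ Type} (α : F ⟶ G) {A B : 𝒞} (f : A ⟶ B) : Prop :=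
  ∀ (b : F.obj B) (a : G.obj A), α.app B b = G.map f a →
    ∃ x : F.obj A, F.map f x = b ∧ α.app A x = a

end SetFunctors

/-- A morphism `α : F → G` in `Sp` (left-exact set-valued functors on `C_Λ`) is
smooth if for all surjections `A ↠ B` in `C_Λ` the map
`F(A) → F(B) ×_{G(B)} G(A)` is surjective. -/
def SpSmooth {F G : ArtAlg Λ ⥤ Type} (α : F ⟶ G) : Prop :=
  ∀ {A B : ArtAlg Λ} (f : A ⟶ B), ArtAlg.Surjective f → RelSurj α f

/-- A morphism `α : F → G` in `cSp` (left-exact set-valued functors on `sC_Λ`)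
is smooth if for all small extensions `A ↠ B` in `sC_Λ` the map
`F(A) → F(B) ×_{G(B)} G(A)` is surjective. -/
def CSpSmooth {F G : SArtAlg Λ ⥤ Type} (α : F ⟶ G) : Prop :=
  ∀ {A B : SArtAlg Λ} (f : A ⟶ B), SArtAlg.SmallExt f → RelSurj α f

/-- A morphism `α : F → G` in `cSp` is quasi-smooth if for all acyclic small
extensions `A ↠ B` in `sC_Λ` the map `F(A) → F(B) ×_{G(B)} G(A)` is surjective. -/
def CSpQuasiSmooth {F G : SArtAlg Λ ⥤ Type} (α : F ⟶ G) : Prop :=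
  ∀ {A B : SArtAlg Λ} (f : A ⟶ B), SArtAlg.AcySmallExt f → RelSurj α f

/-- Evaluation `sC_Λ → C_Λ`, `A ↦ A_0`; composition with it is the inclusion
`Sp ↪ cSp`, `F ↦ (A ↦ F(A_0))`. -/
def ev0 : SArtAlg Λ ⥤ ArtAlg Λ where
  obj A := A.X.obj (op (SimplexCategory.mk (0)))
  map f := NatTrans.app f (op (SimplexCategory.mk (0)))


/-!
Every surjection `A ↠ B` in `C_Λ` with kernel `I` is a finite composite of small extensions
(divide out `m(A)·I`, then repeat), so smoothness in `Sp` may be tested on small extensions.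
A small extension `A ↠ B` is the degree-zero part of the augmentation from its Čech nerve
`[k] ↦ A ×_B ⋯ ×_B A` to the constant object `B`. This augmentation is an acyclic small extension
in `sC_Λ`: `π₀` of the nerve is `A / I = B` and its higher cycles vanish, while `m(A)·I = 0` makes
products of two elements of the maximal ideal constant tuples, which kills the normalised cotangent
space above degree one. Hence quasi-smoothness of the induced morphism gives smoothness in `Sp`;
conversely a small extension in `sC_Λ` is in particular surjective in degree zero.
-/

open IsLocalRing Simplicial

section RelSurj

variable {𝒞 : Type*} [Category 𝒞] {F G : 𝒞 ⥤ Type} {α : F ⟶ G}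

lemma RelSurj.comp {X Y Z : 𝒞} {u : X ⟶ Y} {v : Y ⟶ Z}
    (hu : RelSurj α u) (hv : RelSurj α v) : RelSurj α (u ≫ v) := by
  intro b a hba
  obtain ⟨y, rfl, hy⟩ := hv b (G.map u a) (by rw [hba, Functor.map_comp_apply])
  obtain ⟨x, rfl, hx⟩ := hu y a hy
  exact ⟨x, Functor.map_comp_apply F u v x, hx⟩

lemma RelSurj.of_isIso (α : F ⟶ G) {X Y : 𝒞} (u : X ⟶ Y) [IsIso u] : RelSurj α u := by
  intro b a hba
  refine ⟨F.map (inv u) b, by simp, ?_⟩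
  rw [NatTrans.naturality_apply, hba, ← Functor.map_comp_apply, IsIso.hom_inv_id,
    Functor.map_id_apply]

end RelSurj

namespace ArtAlg

section

omit [IsNoetherianRing Λ] [IsAdicComplete (maximalIdeal Λ) Λ]

lemma exists_pow_maximalIdeal_eq_bot (A : ArtAlg Λ) :
    ∃ n > 0, maximalIdeal A.carrier ^ n = ⊥ := by
  obtain ⟨n, hn⟩ := IsArtinianRing.isNilpotent_jacobson_bot (R := A.carrier)
  rw [jacobson_eq_maximalIdeal ⊥ bot_ne_top] at hn
  exact ⟨n + 1, n.succ_pos, by rw [pow_succ, hn, Ideal.zero_eq_bot, Ideal.bot_mul]⟩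

lemma cotDenom_eq_sq (A : ArtAlg Λ) : cotDenom Λ A = maximalIdeal A.carrier ^ 2 :=
  sup_eq_left.mpr <| (Ideal.mul_mono_left (map_maximalIdeal_le _)).trans_eq (pow_two _).symm

def ofLocalHom (A : ArtAlg Λ) (R : Type) [CommRing R] [Algebra Λ R] [IsArtinianRing R]
    [IsLocalRing R] (g : A.carrier →ₐ[Λ] R) [IsLocalHom g]
    (hg : ∀ x : R, ∃ a, x - g a ∈ maximalIdeal R) : ArtAlg Λ :=
  haveI : IsLocalHom (algebraMap Λ R) := by
    rw [← g.comp_algebraMap]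
    infer_instance
  { carrier := R
    residue_bij := by
      refine ⟨(ResidueField.map (algebraMap Λ R)).injective, fun y => ?_⟩
      obtain ⟨x, rfl⟩ := residue_surjective y
      obtain ⟨a, hxa⟩ := hg x
      obtain ⟨t, ht⟩ := A.residue_bij.2 (residue A.carrier a)
      obtain ⟨l, rfl⟩ := residue_surjective t
      rw [ResidueField.map_residue, ← sub_eq_zero, ← map_sub, residue_eq_zero_iff] at ht
      refine ⟨residue Λ l, ?_⟩
      rw [ResidueField.map_residue, ← sub_eq_zero, ← map_sub, residue_eq_zero_iff, ← g.commutes]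
      have hgl := map_maximalIdeal_le (g : A.carrier →+* R) (Ideal.mem_map_of_mem _ ht)
      simpa [map_sub] using Ideal.sub_mem _ hgl hxa }

end

variable (A : ArtAlg Λ) (J : Ideal A.carrier) (hJ : J ≤ maximalIdeal A.carrier)

def quotient : ArtAlg Λ :=
  haveI : Nontrivial (A.carrier ⧸ J) :=
    Ideal.Quotient.nontrivial_iff.mpr (ne_top_of_le_ne_top (maximalIdeal.isMaximal _).ne_top hJ)
  haveI := IsLocalRing.of_surjective' (Ideal.Quotient.mk J) Ideal.Quotient.mk_surjective
  haveI : IsLocalHom (Ideal.Quotient.mkₐ Λ J) :=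
    ⟨(IsLocalHom.of_surjective _ Ideal.Quotient.mk_surjective).map_nonunit⟩
  ofLocalHom A (A.carrier ⧸ J) (Ideal.Quotient.mkₐ Λ J) fun x => by
    obtain ⟨a, rfl⟩ := Ideal.Quotient.mk_surjective x
    exact ⟨a, by simp⟩

def quotientMk : A ⟶ quotient A J hJ := Ideal.Quotient.mkₐ Λ J

def quotientLift {B : ArtAlg Λ} (f : A ⟶ B) (hf : ∀ a ∈ J, toAlg f a = 0) :
    quotient A J hJ ⟶ B :=
  Ideal.Quotient.liftₐ J (toAlg f) hf

lemma quotientMk_comp_quotientLift {B : ArtAlg Λ} (f : A ⟶ B) (hf : ∀ a ∈ J, toAlg f a = 0) :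
    quotientMk A J hJ ≫ quotientLift A J hJ f hf = f :=
  AlgHom.ext fun _ => rfl

variable {A B : ArtAlg Λ}

def IsSmallExt (f : A ⟶ B) : Prop :=
  ArtAlg.Surjective f ∧ maximalIdeal A.carrier * RingHom.ker (toAlg f) = ⊥

lemma mul_eq_zero_of_mul_ker_eq_bot {f : A ⟶ B}
    (hf : maximalIdeal A.carrier * RingHom.ker (toAlg f) = ⊥) {a b : A.carrier}
    (ha : a ∈ maximalIdeal A.carrier) (hb : toAlg f b = 0) : a * b = 0 := by
  simpa [hf] using Ideal.mul_mem_mul ha (RingHom.mem_ker.mpr hb)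

/-- The factorisation is through `A / m(A)·ker f`. -/
lemma exists_comp_isSmallExt {f : A ⟶ B} (hf : ArtAlg.Surjective f) {n : ℕ}
    (hn : maximalIdeal A.carrier ^ (n + 1) * RingHom.ker (toAlg f) = ⊥) :
    ∃ (C : ArtAlg Λ) (p : A ⟶ C) (g : C ⟶ B), ArtAlg.Surjective p ∧
      maximalIdeal A.carrier ^ n * RingHom.ker (toAlg p) = ⊥ ∧ IsSmallExt g ∧ p ≫ g = f := by
  set J := maximalIdeal A.carrier * RingHom.ker (toAlg f)
  have hJ : J ≤ maximalIdeal A.carrier := Ideal.mul_le_left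
  have hJf : ∀ a ∈ J, toAlg f a = 0 := fun a ha => Ideal.mul_le_right ha
  set π : A.carrier →+* (quotient A J hJ).carrier := (toAlg (quotientMk A J hJ)).toRingHom
  have hπ : Function.Surjective π := Ideal.Quotient.mk_surjective
  have hker_p : RingHom.ker (toAlg (quotientMk A J hJ)) = J := Ideal.Quotient.mkₐ_ker Λ J
  have hker_g :
      RingHom.ker (toAlg (quotientLift A J hJ f hJf)) = (RingHom.ker (toAlg f)).map π := by
    rw [← Ideal.map_comap_of_surjective _ hπ (RingHom.ker (toAlg (quotientLift A J hJ f hJf)))]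
    rfl
  refine ⟨quotient A J hJ, quotientMk A J hJ, quotientLift A J hJ f hJf, hπ,
    by rw [hker_p, ← mul_assoc, ← pow_succ, hn], ⟨?_, ?_⟩,
    quotientMk_comp_quotientLift A J hJ f hJf⟩
  · intro b
    obtain ⟨a, rfl⟩ := hf b
    exact ⟨π a, rfl⟩
  · rw [hker_g, ← map_maximalIdeal_of_surjective π hπ, ← Ideal.map_mul,
      Ideal.map_eq_bot_iff_le_ker]
    exact hker_p.ge

end ArtAlg

namespace SArtAlg

lemma subsingleton_pi_succ {A : SArtAlg Λ} {i : ℕ}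
    (hA : ∀ x, A.isCycle (i + 1) x → x = 0) : Subsingleton (A.pi (i + 1)) :=
  ⟨by rintro ⟨x⟩ ⟨y⟩; exact congrArg _ (Subtype.ext ((hA _ x.2).trans (hA _ y.2).symm))⟩

lemma piMap_succ_bijective {A B : SArtAlg Λ} (f : A ⟶ B) {i : ℕ}
    (hA : ∀ x, A.isCycle (i + 1) x → x = 0) (hB : ∀ x, B.isCycle (i + 1) x → x = 0) :
    Function.Bijective (piMap f (i + 1)) :=
  haveI := subsingleton_pi_succ hA
  haveI := subsingleton_pi_succ hB
  haveI : Nonempty (A.pi (i + 1)) := ⟨Quot.mk _ ⟨0, fun _ => map_zero _⟩⟩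
  ⟨Function.injective_of_subsingleton _, Function.surjective_to_subsingleton _⟩

end SArtAlg

def constSArt (B : ArtAlg Λ) : SArtAlg Λ where
  X := (Functor.const _).obj B
  nilpotent := by
    obtain ⟨n, hn, h⟩ := B.exists_pow_maximalIdeal_eq_bot
    exact ⟨n, hn, fun _ => h⟩
  cotFinite := ⟨1, fun n hn => by
    obtain ⟨m, rfl⟩ := Nat.exists_eq_add_of_le' hn
    exact fun _ _ h => h 0⟩

lemma constSArt_mooreRel_eq {B : ArtAlg Λ} {i : ℕ} : (constSArt B).mooreRel i ≤ Eq := by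
  rintro a b ⟨h, hker, hab⟩
  exact Subtype.ext (sub_eq_zero.mp (hab.symm.trans (hker 0)))

lemma constSArt_isCycle_succ {B : ArtAlg Λ} {i : ℕ}
    (x : ((constSArt B).X.obj (op ⦋i + 1⦌)).carrier) (hx : (constSArt B).isCycle (i + 1) x) :
    x = 0 :=
  hx 0

namespace ArtAlg

variable {A B : ArtAlg Λ} (f : A ⟶ B)

/-- The `k`-simplices `A ×_B ⋯ ×_B A` (`k + 1` factors) of the Čech nerve of `f`. -/
def cechSubalgebra (k : ℕ) : Subalgebra A.carrier (Fin (k + 1) → A.carrier) where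
  carrier := {v | ∀ i, toAlg f (v i) = toAlg f (v 0)}
  mul_mem' {v w} hv hw i := by simp only [Pi.mul_apply, map_mul, hv i, hw i]
  add_mem' {v w} hv hw i := by simp only [Pi.add_apply, map_add, hv i, hw i]
  algebraMap_mem' _ _ := rfl

variable (k : ℕ)

def cechEval (i : Fin (k + 1)) : cechSubalgebra f k →ₐ[Λ] A.carrier :=
  (Pi.evalAlgHom Λ _ i).comp ((cechSubalgebra f k).val.restrictScalars Λ)

def cechDiag : A.carrier →ₐ[Λ] cechSubalgebra f k :=
  (Algebra.ofId A.carrier (cechSubalgebra f k)).restrictScalars Λ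

variable {f k}

lemma map_apply_sub_apply_zero (v : cechSubalgebra f k) (i : Fin (k + 1)) :
    toAlg f (v.1 i - v.1 0) = 0 := by
  rw [map_sub, v.2 i, sub_self]

lemma cechSubalgebra_apply_mem_maximalIdeal_iff (v : cechSubalgebra f k) (i : Fin (k + 1)) :
    v.1 i ∈ maximalIdeal A.carrier ↔ v.1 0 ∈ maximalIdeal A.carrier := by
  have hsub : v.1 i - v.1 0 ∈ maximalIdeal A.carrier :=
    le_maximalIdeal (RingHom.ker_ne_top (toAlg f)) (map_apply_sub_apply_zero v i)
  exact ⟨fun hi => by simpa using Ideal.sub_mem _ hi hsub,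
    fun h0 => by simpa using Ideal.add_mem _ hsub h0⟩

lemma isUnit_cechSubalgebra_iff (v : cechSubalgebra f k) : IsUnit v ↔ IsUnit (v.1 0) := by
  refine ⟨fun h => h.map (cechEval f k 0), fun h0 => ?_⟩
  have hunit : ∀ i, IsUnit (v.1 i) := fun i => by
    simpa using (cechSubalgebra_apply_mem_maximalIdeal_iff v i).not.mpr (by simpa using h0)
  set u := fun i => (hunit i).unit
  have hinv : (fun i => ((u i)⁻¹ : A.carrierˣ).1) ∈ cechSubalgebra f k := fun i => by
    have hu : Units.map (toAlg f : A.carrier →* B.carrier) (u i) = Units.map _ (u 0) :=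
      Units.ext (v.2 i)
    simpa using congrArg (fun w => ((w⁻¹ : B.carrierˣ) : B.carrier)) hu
  exact IsUnit.of_mul_eq_one ⟨_, hinv⟩ (Subtype.ext (funext fun i => (u i).mul_inv))

instance : Nontrivial (cechSubalgebra f k) :=
  ⟨0, 1, fun h => zero_ne_one (congrFun (congrArg Subtype.val h) 0)⟩

instance : IsLocalRing (cechSubalgebra f k) :=
  .of_nonunits_add fun a b ha hb => by
    rw [mem_nonunits_iff, isUnit_cechSubalgebra_iff, ← mem_nonunits_iff] at ha hb ⊢
    exact nonunits_add ha hb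

instance : IsArtinianRing (cechSubalgebra f k) :=
  haveI : IsArtinian A.carrier (cechSubalgebra f k) :=
    isArtinian_of_submodule_of_artinian A.carrier _ (Subalgebra.toSubmodule (cechSubalgebra f k))
      inferInstance
  isArtinian_of_tower A.carrier this

instance : IsLocalHom (cechDiag f k) :=
  ⟨fun _ h => (isUnit_cechSubalgebra_iff _).mp h⟩

lemma mem_maximalIdeal_cechSubalgebra_iff (v : cechSubalgebra f k) :
    v ∈ maximalIdeal (cechSubalgebra f k) ↔ v.1 0 ∈ maximalIdeal A.carrier := by
  rw [mem_maximalIdeal, mem_nonunits_iff, isUnit_cechSubalgebra_iff, ← mem_nonunits_iff,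
    ← mem_maximalIdeal]

lemma cechSubalgebra_apply_mem_maximalIdeal {v : cechSubalgebra f k}
    (hv : v ∈ maximalIdeal (cechSubalgebra f k)) (i : Fin (k + 1)) :
    v.1 i ∈ maximalIdeal A.carrier :=
  (cechSubalgebra_apply_mem_maximalIdeal_iff v i).mpr
    ((mem_maximalIdeal_cechSubalgebra_iff v).mp hv)

lemma pow_maximalIdeal_cechSubalgebra_eq_bot {n : ℕ} (hn : maximalIdeal A.carrier ^ n = ⊥) :
    maximalIdeal (cechSubalgebra f k) ^ n = ⊥ := by
  refine eq_bot_iff.mpr fun v hv => Subtype.ext <| funext fun i => ?_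
  have hle : (maximalIdeal (cechSubalgebra f k)).map (cechEval f k i) ≤ maximalIdeal A.carrier :=
    Ideal.map_le_iff_le_comap.mpr fun w hw => cechSubalgebra_apply_mem_maximalIdeal hw i
  have hvi := Ideal.pow_right_mono hle n (Ideal.map_pow (cechEval f k i) _ _ ▸
    Ideal.mem_map_of_mem (cechEval f k i) hv)
  rwa [hn, Ideal.mem_bot] at hvi

variable (f k)

def cechObj : ArtAlg Λ :=
  ofLocalHom A (cechSubalgebra f k) (cechDiag f k) fun v => ⟨v.1 0, by
    rw [mem_maximalIdeal_cechSubalgebra_iff]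
    show v.1 0 - v.1 0 ∈ _
    rw [sub_self]
    exact zero_mem _⟩

def cechMap {k l : ℕ} (g : Fin (l + 1) → Fin (k + 1)) : cechObj f k ⟶ cechObj f l where
  toFun v := ⟨fun i => v.1 (g i), fun i => by rw [v.2 (g i), v.2 (g 0)]⟩
  map_one' := rfl
  map_mul' _ _ := rfl
  map_zero' := rfl
  map_add' _ _ := rfl
  commutes' _ := rfl

def cechNerve : SimplicialObject (ArtAlg Λ) where
  obj m := cechObj f m.unop.len
  map φ := cechMap f φ.unop.toOrderHom
  map_id _ := rfl
  map_comp _ _ := rfl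

def cechObjZeroIso : A ≅ cechObj f 0 where
  hom := cechDiag f 0
  inv := cechEval f 0 0
  hom_inv_id := AlgHom.ext fun _ => rfl
  inv_hom_id := AlgHom.ext fun v => Subtype.ext <| funext fun i => by
    rw [Fin.fin_one_eq_zero i]
    rfl

variable {f k}

lemma cechNerve_apply_eq_of_δ_eq_cechDiag {n : ℕ} {j : Fin (n + 2)}
    {x : ((cechNerve f).obj (op ⦋n + 1⦌)).carrier} {a : A.carrier}
    (h : cechDiag f n a = toAlg ((cechNerve f).δ j) x) {c : Fin (n + 2)} (hc : c ≠ j) :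
    x.1 c = a := by
  obtain ⟨l, rfl⟩ := Fin.exists_succAbove_eq hc
  exact (congrFun (congrArg Subtype.val h) l).symm

section SmallExt

variable (hf : maximalIdeal A.carrier * RingHom.ker (toAlg f) = ⊥)
include hf

lemma cechSubalgebra_mul_eq_cechDiag {r s : cechSubalgebra f k}
    (hr : r ∈ maximalIdeal (cechSubalgebra f k)) (hs : s ∈ maximalIdeal (cechSubalgebra f k)) :
    r * s = cechDiag f k (r.1 0 * s.1 0) := by
  refine Subtype.ext <| funext fun i => ?_
  have h₁ := mul_eq_zero_of_mul_ker_eq_bot hf (cechSubalgebra_apply_mem_maximalIdeal hr i)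
    (map_apply_sub_apply_zero s i)
  have h₂ := mul_eq_zero_of_mul_ker_eq_bot hf (cechSubalgebra_apply_mem_maximalIdeal hs 0)
    (map_apply_sub_apply_zero r i)
  change r.1 i * s.1 i = r.1 0 * s.1 0
  linear_combination h₁ + h₂

lemma mem_sq_maximalIdeal_cechSubalgebra_iff (v : cechSubalgebra f k) :
    v ∈ maximalIdeal (cechSubalgebra f k) ^ 2 ↔
      ∃ a ∈ maximalIdeal A.carrier ^ 2, cechDiag f k a = v := by
  constructor
  · intro hv
    rw [pow_two] at hv
    refine Submodule.mul_induction_on hv (fun r hr s hs => ?_) ?_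
    · exact ⟨r.1 0 * s.1 0, pow_two (maximalIdeal A.carrier) ▸
        Ideal.mul_mem_mul ((mem_maximalIdeal_cechSubalgebra_iff r).mp hr)
          ((mem_maximalIdeal_cechSubalgebra_iff s).mp hs),
        (cechSubalgebra_mul_eq_cechDiag hf hr hs).symm⟩
    · rintro _ _ ⟨a, ha, rfl⟩ ⟨b, hb, rfl⟩
      exact ⟨a + b, Ideal.add_mem _ ha hb, map_add _ a b⟩
  · rintro ⟨a, ha, rfl⟩
    have hle : (maximalIdeal A.carrier).map (cechDiag f k) ≤ maximalIdeal (cechSubalgebra f k) :=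
      Ideal.map_le_iff_le_comap.mpr fun a ha => (mem_maximalIdeal_cechSubalgebra_iff _).mpr ha
    have := Ideal.mem_map_of_mem (cechDiag f k) ha
    rw [Ideal.map_pow] at this
    exact Ideal.pow_right_mono hle 2 this

/-- Both faces `∂₁ x` and `∂ₙ₊₂ x` are constant tuples, and together they see every coordinate
of `x`. -/
lemma normCotVanish_cechNerve (n : ℕ) : NormCotVanish Λ (cechNerve f) (n + 2) := by
  intro x _ hfaces
  simp only [cotDenom_eq_sq] at hfaces ⊢
  obtain ⟨a, ha, hxa⟩ := (mem_sq_maximalIdeal_cechSubalgebra_iff hf _).mp (hfaces 0)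
  obtain ⟨b, -, hxb⟩ := (mem_sq_maximalIdeal_cechSubalgebra_iff hf _).mp (hfaces (Fin.last _))
  have hx₀a : x.1 0 = a := cechNerve_apply_eq_of_δ_eq_cechDiag hxa (Fin.succ_ne_zero 0).symm
  have hx₀b : x.1 0 = b := cechNerve_apply_eq_of_δ_eq_cechDiag hxb (Fin.succ_ne_zero _).symm
  refine (mem_sq_maximalIdeal_cechSubalgebra_iff hf x).mpr
    ⟨a, ha, Subtype.ext <| funext fun c => ?_⟩
  by_cases hc : c = 1
  · subst hc
    have hx₁b : x.1 1 = b := cechNerve_apply_eq_of_δ_eq_cechDiag hxb (by simp [Fin.ext_iff])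
    exact hx₀a.symm.trans (hx₀b.trans hx₁b.symm)
  · exact (cechNerve_apply_eq_of_δ_eq_cechDiag hxa hc).symm

end SmallExt

variable (f) (hf : maximalIdeal A.carrier * RingHom.ker (toAlg f) = ⊥)

def cechNerveSArt : SArtAlg Λ where
  X := cechNerve f
  nilpotent := by
    obtain ⟨n, hn, h⟩ := A.exists_pow_maximalIdeal_eq_bot
    exact ⟨n, hn, fun _ => pow_maximalIdeal_cechSubalgebra_eq_bot h⟩
  cotFinite := ⟨2, fun n hn => by
    obtain ⟨m, rfl⟩ := Nat.exists_eq_add_of_le' hn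
    exact normCotVanish_cechNerve hf m⟩

def cechAug : cechNerveSArt f hf ⟶ constSArt B where
  app m := ((toAlg f).comp (cechEval f m.unop.len 0) : cechObj f m.unop.len ⟶ B)
  naturality _ _ φ := AlgHom.ext fun v => v.2 (φ.unop.toOrderHom 0)

variable {f}

lemma cechAug_smallExt (hs : ArtAlg.Surjective f) : SArtAlg.SmallExt (cechAug f hf) := by
  refine ⟨fun m b => ?_, fun m => eq_bot_iff.mpr <| Ideal.mul_le.mpr fun r hr s hs => ?_⟩
  · obtain ⟨a, rfl⟩ := hs b
    exact ⟨cechDiag f _ a, rfl⟩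
  · refine Ideal.mem_bot.mpr <| Subtype.ext <| funext fun i => ?_
    refine mul_eq_zero_of_mul_ker_eq_bot hf (cechSubalgebra_apply_mem_maximalIdeal hr i) ?_
    exact (s.2 i).trans (RingHom.mem_ker.mp hs)

lemma cechNerveSArt_isCycle_succ {i : ℕ}
    (x : ((cechNerveSArt f hf).X.obj (op ⦋i + 1⦌)).carrier)
    (hx : (cechNerveSArt f hf).isCycle (i + 1) x) : x = 0 := by
  refine Subtype.ext <| funext fun c => ?_
  obtain ⟨j, hj⟩ := exists_ne c
  exact cechNerve_apply_eq_of_δ_eq_cechDiag ((map_zero _).trans (hx j).symm) hj.symm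

/-- The witness is the 1-simplex `(0, u - v)`. -/
lemma cechNerveSArt_mooreRel_zero {u v} (h : toAlg f (u.1.1 0) = toAlg f (v.1.1 0)) :
    (cechNerveSArt f hf).mooreRel 0 u v := by
  refine ⟨⟨![0, u.1.1 0 - v.1.1 0], Fin.forall_fin_two.mpr ⟨rfl, by simp [h]⟩⟩,
    fun j => Subtype.ext <| funext fun l => ?_, Subtype.ext <| funext fun l => ?_⟩
  · rw [Fin.fin_one_eq_zero j, Fin.fin_one_eq_zero l]
    rfl
  · rw [Fin.fin_one_eq_zero l]
    rfl

lemma cechAug_acyclic (hs : ArtAlg.Surjective f) : SArtAlg.Acyclic (cechAug f hf) := by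
  rintro (_ | i)
  · refine ⟨?_, ?_⟩
    · rintro ⟨u⟩ ⟨v⟩ h
      have huv := (Equivalence.eqvGen_iff eq_equivalence).mp
        (Relation.EqvGen.mono constSArt_mooreRel_eq _ _ (Quot.eq.mp h))
      exact Quot.sound (cechNerveSArt_mooreRel_zero hf (congrArg Subtype.val huv))
    · rintro ⟨b⟩
      obtain ⟨a, ha⟩ := hs b.1
      exact ⟨Quot.mk _ ⟨cechDiag f 0 a, trivial⟩, congrArg _ (Subtype.ext ha)⟩
  · exact SArtAlg.piMap_succ_bijective _ (cechNerveSArt_isCycle_succ hf) constSArt_isCycle_succ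

end ArtAlg

section Smoothness

variable {F G : ArtAlg Λ ⥤ Type} {α : F ⟶ G}

lemma SpSmooth.of_isSmallExt
    (h : ∀ {A B : ArtAlg Λ} (f : A ⟶ B), ArtAlg.IsSmallExt f → RelSurj α f) : SpSmooth α := by
  intro A B f hf
  obtain ⟨n, -, hn⟩ := A.exists_pow_maximalIdeal_eq_bot
  suffices ∀ n {A B : ArtAlg Λ} (f : A ⟶ B), ArtAlg.Surjective f →
      maximalIdeal A.carrier ^ n * RingHom.ker (ArtAlg.toAlg f) = ⊥ → RelSurj α f from
    this n f hf (by rw [hn, Ideal.bot_mul])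
  intro n
  induction n with
  | zero =>
    intro A B f hf hker
    rw [pow_zero, Ideal.one_eq_top, Ideal.top_mul] at hker
    exact h f ⟨hf, by rw [hker, Ideal.mul_bot]⟩
  | succ n ih =>
    intro A B f hf hker
    obtain ⟨C, p, g, hp, hpker, hg, rfl⟩ := ArtAlg.exists_comp_isSmallExt hf hker
    exact (ih p hp hpker).comp (h g hg)

lemma CSpQuasiSmooth.relSurj_of_isSmallExt (hq : CSpQuasiSmooth (Functor.whiskerLeft ev0 α))
    {A B : ArtAlg Λ} {f : A ⟶ B} (hf : ArtAlg.IsSmallExt f) : RelSurj α f := by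
  have hrel : RelSurj α (ev0.map (ArtAlg.cechAug f hf.2)) :=
    hq _ ⟨ArtAlg.cechAug_smallExt hf.2 hf.1, ArtAlg.cechAug_acyclic hf.2 hf.1⟩
  have hfac : (ArtAlg.cechObjZeroIso f).hom ≫ ev0.map (ArtAlg.cechAug f hf.2) = f :=
    AlgHom.ext fun _ => rfl
  rw [← hfac]
  exact (RelSurj.of_isIso α _).comp hrel

lemma SpSmooth.of_cSpQuasiSmooth (hq : CSpQuasiSmooth (Functor.whiskerLeft ev0 α)) :
    SpSmooth α :=
  SpSmooth.of_isSmallExt fun _ hf => hq.relSurj_of_isSmallExt hf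

lemma SpSmooth.cSpSmooth (hs : SpSmooth α) : CSpSmooth (Functor.whiskerLeft ev0 α) :=
  fun u hu => hs (ev0.map u) (hu.1 _)

end Smoothness

lemma CSpSmooth.cSpQuasiSmooth {F G : SArtAlg Λ ⥤ Type} {α : F ⟶ G} (hs : CSpSmooth α) :
    CSpQuasiSmooth α :=
  fun u hu => hs u hu.1

theorem spSmooth_iff_induced_quasiSmooth_iff_induced_smooth_general
    {F G : ArtAlg Λ ⥤ Type}
    (α : F ⟶ G) :
    (SpSmooth α ↔ CSpQuasiSmooth (Functor.whiskerLeft ev0 α)) ∧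
    (CSpQuasiSmooth (Functor.whiskerLeft ev0 α) ↔
      CSpSmooth (Functor.whiskerLeft ev0 α)) :=
  ⟨⟨fun hs => CSpSmooth.cSpQuasiSmooth (SpSmooth.cSpSmooth hs), SpSmooth.of_cSpQuasiSmooth⟩,
    ⟨fun hq => SpSmooth.cSpSmooth (SpSmooth.of_cSpQuasiSmooth hq), CSpSmooth.cSpQuasiSmooth⟩⟩

/-- Lemma 1.16: for a morphism `α : F → G` of left-exact
set-valued functors on `C_Λ`, smoothness, quasi-smoothness of the induced
morphism in `cSp`, and smoothness of the induced morphism in `cSp` are all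
equivalent. -/
theorem spSmooth_iff_induced_quasiSmooth_iff_induced_smooth
    {F G : ArtAlg Λ ⥤ Type} [Limits.PreservesFiniteLimits F] [Limits.PreservesFiniteLimits G]
    (α : F ⟶ G) :
    (SpSmooth α ↔ CSpQuasiSmooth (Functor.whiskerLeft ev0 α)) ∧
    (CSpQuasiSmooth (Functor.whiskerLeft ev0 α) ↔
      CSpSmooth (Functor.whiskerLeft ev0 α)) :=
  spSmooth_iff_induced_quasiSmooth_iff_induced_smooth_general α
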